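/- arXiv:2404.04613 — 2 statements merged into one kernel-verified Lean document; each statement's English description precedes it below -/
import Mathlib

section
/- Let P be a convex n-gon in ℝ² and let m be any natural number. Then there exists a guard set G ⊆ P with exactly m guards such that no point of P is hidden from three distinct guards of G; that is, every point x ∈ P is hidden from at most two guards of G. -/
open Set

noncomputable section

/-- The Euclidean plane ℝ². -/
abbrev Plane : Type := EuclideanSpace ℝ (Fin 2)

/-- `P` is a convex `n`-gon with vertex set `V`: `V` is a finite set of exactly `n ≥ 3`
points, `P` is its convex hull, and each point of `V` is an extreme point of `P`. -/
def IsConvexPolygon (n : ℕ) (V : Finset Plane) (P : Set Plane) : Prop :=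
  3 ≤ n ∧ V.card = n ∧ P = convexHull ℝ (V : Set Plane) ∧
    ∀ v ∈ V, v ∈ Set.extremePoints ℝ P

/-- Point `p` is hidden from guard `g` (w.r.t. guard set `G`): some other guard `b ∈ G`
lies strictly between `g` and `p`. -/
def Hidden (G : Finset Plane) (g p : Plane) : Prop :=
  ∃ b ∈ G, b ≠ g ∧ b ∈ openSegment ℝ g p

/-- `G` `k`-covers `P`: every point of `P` is visible from at least `k` guards of `G`. -/
def KCovers (G : Finset Plane) (P : Set Plane) (k : ℕ) : Prop :=
  ∀ p ∈ P, k ≤ {g ∈ (G : Set Plane) | ¬ Hidden G g p}.ncard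

/-- `W` is a wedge: a closed planar convex cone with apex `a` spanned by two
linearly independent directions `u`, `v`. -/
def IsWedge (W : Set Plane) : Prop :=
  ∃ a u v : Plane, LinearIndependent ℝ ![u, v] ∧
    W = {x | ∃ s t : ℝ, 0 ≤ s ∧ 0 ≤ t ∧ x = a + s • u + t • v}

/-!
Place the guards one at a time in the interior of `P`, each new guard avoiding the countably
many lines through two earlier guards, or through an earlier guard and a point where two lines
through pairs of earlier guards cross; these lines have measure zero. The guards then have no
three on a line, and no three lines through pairs of guards meet outside the guard set.
If `x` were hidden from three guards `gᵢ` by blockers `bᵢ`, then `x` is not a guard (else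
`gᵢ, bᵢ, x` would be three collinear guards), so two of the lines `gᵢbᵢ` through `x` coincide,
hence `{gᵢ, bᵢ} = {gⱼ, bⱼ}`; but `bᵢ` strictly between `gᵢ` and `x` and `gᵢ` strictly between
`bᵢ` and `x` is impossible.
-/

section Affine

variable {E : Type*} [AddCommGroup E] [Module ℝ E]

lemma sbtw_of_mem_openSegment {x y z : E} (h : y ∈ openSegment ℝ x z) (hyx : y ≠ x) :
    Sbtw ℝ x y z := by
  refine ⟨mem_segment_iff_wbtw.1 (openSegment_subset_segment ℝ x z h), hyx, ?_⟩
  rintro rfl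
  exact hyx (right_mem_openSegment_iff.1 h).symm

lemma Sbtw.right_mem_affineSpan_pair {x y z : E} (h : Sbtw ℝ x y z) : z ∈ line[ℝ, x, y] := by
  rw [affineSpan_pair_eq_of_right_mem_of_ne h.wbtw.mem_affineSpan h.ne_left]
  exact _root_.right_mem_affineSpan_pair ℝ x z

lemma not_collinear_of_mem_extremePoints {A : Set E} {a b c : E}
    (ha : a ∈ extremePoints ℝ A) (hb : b ∈ extremePoints ℝ A) (hc : c ∈ extremePoints ℝ A)
    (hab : a ≠ b) (hac : a ≠ c) (hbc : b ≠ c) : ¬ Collinear ℝ ({a, b, c} : Set E) := by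
  have between : ∀ {x y z : E}, x ∈ extremePoints ℝ A → y ∈ extremePoints ℝ A →
      z ∈ extremePoints ℝ A → Wbtw ℝ x y z → x = y ∨ z = y := fun hx hy hz hxyz =>
    (mem_extremePoints_iff_forall_segment.1 hy).2 _ hx.1 _ hz.1 hxyz.mem_segment
  intro hcol
  rcases hcol.wbtw_or_wbtw_or_wbtw with h | h | h
  · rcases between ha hb hc h with h | h <;> simp_all
  · rcases between hb hc ha h with h | h <;> simp_all
  · rcases between hc ha hb h with h | h <;> simp_all

lemma affineSpan_pair_ne_top (hE : 2 ≤ Module.finrank ℝ E) (a b : E) :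
    line[ℝ, a, b] ≠ ⊤ := by
  intro h
  have := (collinear_iff_finrank_le_one (k := ℝ)).1 (collinear_pair ℝ a b)
  rw [← direction_affineSpan, h, AffineSubspace.direction_top, finrank_top] at this
  omega

end Affine

section FiniteDimensional

variable {E : Type*} [NormedAddCommGroup E] [NormedSpace ℝ E] [FiniteDimensional ℝ E]

open MeasureTheory in
lemma exists_mem_open_forall_notMem_of_countable {U : Set E} (hU : IsOpen U)
    (hne : U.Nonempty) {S : Set (AffineSubspace ℝ E)} (hS : S.Countable)
    (hproper : ∀ L ∈ S, L ≠ ⊤) : ∃ x ∈ U, ∀ L ∈ S, x ∉ L := by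
  borelize E
  by_contra! hcover
  have hnull : Measure.addHaar (⋃ L ∈ S, (L : Set E)) = 0 :=
    (measure_biUnion_null_iff hS).2 fun L hL =>
      Measure.addHaar_affineSubspace _ L (hproper L hL)
  refine (hU.measure_pos Measure.addHaar hne).ne' (measure_mono_null ?_ hnull)
  intro x hx
  obtain ⟨L, hL, hxL⟩ := hcover x hx
  exact mem_biUnion hL hxL

lemma Convex.interior_nonempty_of_three_extremePoints
    (hE : Module.finrank ℝ E = 2) {A : Set E} (hA : Convex ℝ A) {a b c : E}
    (ha : a ∈ extremePoints ℝ A) (hb : b ∈ extremePoints ℝ A) (hc : c ∈ extremePoints ℝ A)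
    (hab : a ≠ b) (hac : a ≠ c) (hbc : b ≠ c) : (interior A).Nonempty := by
  have hind : AffineIndependent ℝ ![a, b, c] := affineIndependent_iff_not_collinear_set.2
    (not_collinear_of_mem_extremePoints ha hb hc hab hac hbc)
  have htop : affineSpan ℝ (range ![a, b, c]) = ⊤ := by
    rw [hind.affineSpan_eq_top_iff_card_eq_finrank_add_one, hE]
    rfl
  refine hA.interior_nonempty_iff_affineSpan_eq_top.2 (eq_top_iff.2 (htop ▸ affineSpan_mono ℝ ?_))
  rw [range_subset_iff]
  intro i
  fin_cases i
  exacts [ha.1, hb.1, hc.1]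

end FiniteDimensional

namespace GuardPlacement

section Lines

variable {E : Type*} [AddCommGroup E] [Module ℝ E]

def connectingLines (s : Set E) : Set (AffineSubspace ℝ E) :=
  {L | ∃ a ∈ s, ∃ b ∈ s, a ≠ b ∧ L = line[ℝ, a, b]}

def crossings (s : Set E) : Set E :=
  {x | ∃ L₁ ∈ connectingLines s, ∃ L₂ ∈ connectingLines s, L₁ ≠ L₂ ∧ x ∈ L₁ ∧ x ∈ L₂}

def NoThreeCollinear (s : Set E) : Prop :=
  ∀ a ∈ s, ∀ b ∈ s, a ≠ b → ∀ c ∈ s, c ∈ line[ℝ, a, b] → c = a ∨ c = b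

def NoThreeConcurrent (s : Set E) : Prop :=
  ∀ x ∉ s, ∀ L₁ ∈ connectingLines s, ∀ L₂ ∈ connectingLines s, ∀ L₃ ∈ connectingLines s,
    x ∈ L₁ → x ∈ L₂ → x ∈ L₃ → L₁ = L₂ ∨ L₁ = L₃ ∨ L₂ = L₃

lemma connectingLines_countable {s : Set E} (hs : s.Countable) :
    (connectingLines s).Countable := by
  refine ((hs.prod hs).image fun p => line[ℝ, p.1, p.2]).mono ?_
  rintro L ⟨a, ha, b, hb, -, rfl⟩
  exact ⟨(a, b), ⟨ha, hb⟩, rfl⟩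

lemma eq_of_mem_connectingLines {s : Set E} {L₁ L₂ : AffineSubspace ℝ E}
    (h₁ : L₁ ∈ connectingLines s) (h₂ : L₂ ∈ connectingLines s) {x y : E} (hxy : x ≠ y)
    (hx₁ : x ∈ L₁) (hy₁ : y ∈ L₁) (hx₂ : x ∈ L₂) (hy₂ : y ∈ L₂) : L₁ = L₂ := by
  obtain ⟨a, -, b, -, -, rfl⟩ := h₁
  obtain ⟨c, -, d, -, -, rfl⟩ := h₂
  rw [← affineSpan_pair_eq_of_mem_of_mem_of_ne hx₁ hy₁ hxy,
    affineSpan_pair_eq_of_mem_of_mem_of_ne hx₂ hy₂ hxy]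

lemma crossings_countable {s : Set E} (hs : s.Countable) : (crossings s).Countable := by
  have hC := connectingLines_countable hs
  refine ((hC.biUnion fun L₁ h₁ => hC.biUnion fun L₂ h₂ =>
    Set.Subsingleton.countable (s := {x | L₁ ≠ L₂ ∧ x ∈ L₁ ∧ x ∈ L₂}) ?_)).mono ?_
  · rintro x ⟨hne, hx₁, hx₂⟩ y ⟨-, hy₁, hy₂⟩
    by_contra hxy
    exact hne (eq_of_mem_connectingLines h₁ h₂ hxy hx₁ hy₁ hx₂ hy₂)
  · rintro x ⟨L₁, h₁, L₂, h₂, hx⟩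
    exact mem_biUnion h₁ (mem_biUnion h₂ hx)

lemma mem_connectingLines_insert {s : Set E} {g : E} {L : AffineSubspace ℝ E}
    (hL : L ∈ connectingLines (insert g s)) :
    L ∈ connectingLines s ∨ ∃ a ∈ s, L = line[ℝ, g, a] := by
  obtain ⟨a, ha, b, hb, hab, rfl⟩ := hL
  rcases ha with rfl | ha <;> rcases hb with rfl | hb
  · exact absurd rfl hab
  · exact Or.inr ⟨b, hb, rfl⟩
  · exact Or.inr ⟨a, ha, by rw [Set.pair_comm]⟩
  · exact Or.inl ⟨a, ha, b, hb, hab, rfl⟩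

lemma noThreeCollinear_insert {s : Set E} (hs : NoThreeCollinear s) {g : E}
    (hg : ∀ a ∈ s, ∀ b ∈ s, g ∉ line[ℝ, a, b]) : NoThreeCollinear (insert g s) := by
  -- a point `c ≠ b` of `s` on the line `gb` would put `g` on the line `cb`
  have hline : ∀ b ∈ s, ∀ c ∈ s, c ∈ line[ℝ, g, b] → c = b := by
    intro b hb c hc hcg
    by_contra hcb
    refine hg c hc b hb ?_
    rw [affineSpan_pair_eq_of_left_mem_of_ne hcg hcb]
    exact left_mem_affineSpan_pair ℝ g b
  intro a ha b hb hab c hc hcab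
  rcases hc with rfl | hc
  · rcases ha with rfl | ha
    · exact Or.inl rfl
    rcases hb with rfl | hb
    · exact Or.inr rfl
    exact absurd hcab (hg a ha b hb)
  rcases ha with rfl | ha <;> rcases hb with rfl | hb
  · exact absurd rfl hab
  · exact Or.inr (hline b hb c hc hcab)
  · exact Or.inl (hline a ha c hc (by rwa [Set.pair_comm]))
  · exact hs a ha b hb hab c hc hcab

lemma noThreeConcurrent_insert {s : Set E} (hs : NoThreeConcurrent s) {g : E}
    (hg : ∀ a ∈ s, ∀ b ∈ s ∪ crossings s, g ∉ line[ℝ, a, b]) :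
    NoThreeConcurrent (insert g s) := by
  intro x hx L₁ h₁ L₂ h₂ L₃ h₃ hx₁ hx₂ hx₃
  obtain ⟨hxg, hxs⟩ : x ≠ g ∧ x ∉ s := by simpa only [mem_insert_iff, not_or] using hx
  have new_eq : ∀ a b : E, x ∈ line[ℝ, g, a] → x ∈ line[ℝ, g, b] →
      line[ℝ, g, a] = line[ℝ, g, b] := fun a b ha hb => by
    rw [← affineSpan_pair_eq_of_right_mem_of_ne ha hxg,
      affineSpan_pair_eq_of_right_mem_of_ne hb hxg]
  by_cases hxc : x ∈ crossings s
  · -- then no line `ga` passes through `x`, as `g` would lie on the line `ax`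
    have old : ∀ L ∈ connectingLines (insert g s), x ∈ L → L ∈ connectingLines s := by
      intro L hL hxL
      refine (mem_connectingLines_insert hL).resolve_right ?_
      rintro ⟨a, ha, rfl⟩
      refine hg a ha x (Or.inr hxc) ?_
      rw [Set.pair_comm,
        affineSpan_pair_eq_of_left_mem_of_ne hxL (ne_of_mem_of_not_mem ha hxs).symm]
      exact left_mem_affineSpan_pair ℝ g a
    exact hs x hxs L₁ (old L₁ h₁ hx₁) L₂ (old L₂ h₂ hx₂) L₃ (old L₃ h₃ hx₃) hx₁ hx₂ hx₃
  · -- then two old lines through `x` coincide, as do two new ones; conclude by pigeonhole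
    have old_eq : ∀ L ∈ connectingLines s, ∀ L' ∈ connectingLines s, x ∈ L → x ∈ L' → L = L' :=
      fun L hL L' hL' hxL hxL' => by_contra fun hne => hxc ⟨L, hL, L', hL', hne, hxL, hxL'⟩
    rcases mem_connectingLines_insert h₁ with h₁ | ⟨a₁, -, rfl⟩ <;>
    rcases mem_connectingLines_insert h₂ with h₂ | ⟨a₂, -, rfl⟩ <;>
    rcases mem_connectingLines_insert h₃ with h₃ | ⟨a₃, -, rfl⟩
    all_goals first
      | exact Or.inl (old_eq _ h₁ _ h₂ hx₁ hx₂)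
      | exact Or.inl (new_eq _ _ hx₁ hx₂)
      | exact Or.inr (Or.inl (old_eq _ h₁ _ h₃ hx₁ hx₃))
      | exact Or.inr (Or.inl (new_eq _ _ hx₁ hx₃))
      | exact Or.inr (Or.inr (old_eq _ h₂ _ h₃ hx₂ hx₃))
      | exact Or.inr (Or.inr (new_eq _ _ hx₂ hx₃))

lemma eq_of_sbtw_of_affineSpan_pair_eq {s : Set E} (hs : NoThreeCollinear s) {g b g' b' x : E}
    (hg : g ∈ s) (hb : b ∈ s) (hg' : g' ∈ s) (hb' : b' ∈ s) (h : Sbtw ℝ g b x)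
    (h' : Sbtw ℝ g' b' x) (hline : line[ℝ, g, b] = line[ℝ, g', b']) : g = g' := by
  have mem : ∀ c ∈ s, c ∈ line[ℝ, g', b'] → c = g ∨ c = b := fun c hc hcl =>
    hs g hg b hb h.left_ne c hc (hline ▸ hcl)
  rcases mem g' hg' (left_mem_affineSpan_pair ℝ g' b') with rfl | rfl
  · rfl
  · rcases mem b' hb' (right_mem_affineSpan_pair ℝ _ b') with rfl | rfl
    · exact absurd h'.wbtw h.not_swap_left
    · exact absurd rfl h'.ne_left

end Lines

lemma exists_finset_noThreeCollinear_noThreeConcurrent {E : Type*} [NormedAddCommGroup E]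
    [NormedSpace ℝ E] [FiniteDimensional ℝ E] (hE : 2 ≤ Module.finrank ℝ E)
    {U : Set E} (hU : IsOpen U) (hne : U.Nonempty) (m : ℕ) :
    ∃ G : Finset E, ↑G ⊆ U ∧ G.card = m ∧
      NoThreeCollinear (G : Set E) ∧ NoThreeConcurrent (G : Set E) := by
  classical
  induction m with
  | zero =>
    exact ⟨∅, by simp, rfl, by simp [NoThreeCollinear],
      by simp [NoThreeConcurrent, connectingLines]⟩
  | succ m ih =>
    obtain ⟨G, hGU, hcard, hcol, hconc⟩ := ih
    set S := (fun p : E × E => line[ℝ, p.1, p.2]) '' ((G : Set E) ×ˢ (↑G ∪ crossings ↑G))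
    have hS : S.Countable :=
      (G.countable_toSet.prod (G.countable_toSet.union
        (crossings_countable G.countable_toSet))).image _
    obtain ⟨g, hgU, hgS⟩ := exists_mem_open_forall_notMem_of_countable hU hne hS
      (by rintro _ ⟨p, -, rfl⟩; exact affineSpan_pair_ne_top hE _ _)
    have hg : ∀ a ∈ (G : Set E), ∀ b ∈ (G : Set E) ∪ crossings ↑G, g ∉ line[ℝ, a, b] :=
      fun a ha b hb => hgS _ ⟨(a, b), ⟨ha, hb⟩, rfl⟩
    have hgG : g ∉ G := fun h => hg g h g (Or.inl h) (left_mem_affineSpan_pair ℝ g g)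
    refine ⟨insert g G, ?_, by rw [Finset.card_insert_of_notMem hgG, hcard], ?_, ?_⟩
    · rw [Finset.coe_insert]
      exact insert_subset hgU hGU
    · rw [Finset.coe_insert]
      exact noThreeCollinear_insert hcol fun a ha b hb => hg a ha b (Or.inl hb)
    · rw [Finset.coe_insert]
      exact noThreeConcurrent_insert hconc hg

end GuardPlacement

open GuardPlacement

lemma Hidden.exists_sbtw {G : Finset Plane} {g x : Plane} (h : Hidden G g x) :
    ∃ b ∈ G, Sbtw ℝ g b x := by
  obtain ⟨b, hb, hbg, hbx⟩ := h
  exact ⟨b, hb, sbtw_of_mem_openSegment hbx hbg⟩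

lemma ncard_hidden_le_two {G : Finset Plane} (hcol : NoThreeCollinear (G : Set Plane))
    (hconc : NoThreeConcurrent (G : Set Plane)) (x : Plane) :
    {g ∈ (G : Set Plane) | Hidden G g x}.ncard ≤ 2 := by
  by_contra! h
  obtain ⟨g₁, g₂, g₃, ⟨hg₁, h₁⟩, ⟨hg₂, h₂⟩, ⟨hg₃, h₃⟩, h₁₂, h₁₃, h₂₃⟩ :=
    (Set.two_lt_ncard_iff (G.finite_toSet.subset (sep_subset _ _))).1 h
  obtain ⟨b₁, hb₁, s₁⟩ := h₁.exists_sbtw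
  obtain ⟨b₂, hb₂, s₂⟩ := h₂.exists_sbtw
  obtain ⟨b₃, hb₃, s₃⟩ := h₃.exists_sbtw
  by_cases hx : x ∈ G
  · rcases hcol g₁ hg₁ b₁ hb₁ s₁.left_ne x hx s₁.right_mem_affineSpan_pair with h | h
    exacts [s₁.left_ne_right h.symm, s₁.ne_right h.symm]
  · have hL : ∀ g ∈ G, ∀ b ∈ G, Sbtw ℝ g b x → line[ℝ, g, b] ∈ connectingLines (G : Set Plane) :=
      fun g hg b hb s => ⟨g, hg, b, hb, s.left_ne, rfl⟩
    rcases hconc x hx _ (hL _ hg₁ _ hb₁ s₁) _ (hL _ hg₂ _ hb₂ s₂) _ (hL _ hg₃ _ hb₃ s₃)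
      s₁.right_mem_affineSpan_pair s₂.right_mem_affineSpan_pair
      s₃.right_mem_affineSpan_pair with h | h | h
    · exact h₁₂ (eq_of_sbtw_of_affineSpan_pair_eq hcol hg₁ hb₁ hg₂ hb₂ s₁ s₂ h)
    · exact h₁₃ (eq_of_sbtw_of_affineSpan_pair_eq hcol hg₁ hb₁ hg₃ hb₃ s₁ s₃ h)
    · exact h₂₃ (eq_of_sbtw_of_affineSpan_pair_eq hcol hg₂ hb₂ hg₃ hb₃ s₂ s₃ h)

lemma IsConvexPolygon.interior_nonempty {n : ℕ} {V : Finset Plane} {P : Set Plane}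
    (hP : IsConvexPolygon n V P) : (interior P).Nonempty := by
  obtain ⟨hn, hcard, rfl, hext⟩ := hP
  obtain ⟨a, ha, b, hb, c, hc, hab, hac, hbc⟩ := Finset.two_lt_card.1 (by omega : 2 < V.card)
  exact (convex_convexHull ℝ _).interior_nonempty_of_three_extremePoints
    finrank_euclideanSpace_fin (hext a ha) (hext b hb) (hext c hc) hab hac hbc

/-- For any m, one can place exactly m guards in a convex n-gon so that
every point of P is hidden from at most two guards. -/
theorem statement8 (n m : ℕ) (V : Finset Plane) (P : Set Plane)
    (hP : IsConvexPolygon n V P) :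
    ∃ G : Finset Plane, ↑G ⊆ P ∧ G.card = m ∧
      ∀ x ∈ P, {g ∈ (G : Set Plane) | Hidden G g x}.ncard ≤ 2 := by
  obtain ⟨G, hG, hcard, hcol, hconc⟩ := exists_finset_noThreeCollinear_noThreeConcurrent
    finrank_euclideanSpace_fin.ge isOpen_interior hP.interior_nonempty m
  exact ⟨G, hG.trans interior_subset, hcard, fun x _ => ncard_hidden_le_two hcol hconc x⟩
end
end

section
/- Let W be a wedge in ℝ² and let G ⊆ W be a guard set with |G| ≥ 3. Then there exist a point x ∈ W and a guard g ∈ G such that x is hidden from g. -/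
open Set

noncomputable section

/-!
A guard `g` is hidden behind another guard `b` from every point `b + ε • (b - g)`, `ε > 0`, of
the ray from `g` through `b` beyond `b`, so it suffices to find two guards for which this ray
leaves `W` only after passing `b`. In the coordinates `(s, t)` of the wedge the guards lie in
the closed quadrant. If some guard lies in the open quadrant, any other guard will do for `g`,
since a short continuation of the ray stays in the open quadrant. Otherwise every guard lies on
one of the two boundary rays; with three guards, two share a ray, and the one nearer the apex
serves as `g`.
-/

open Filter Topology

theorem mem_openSegment_add_smul_sub {𝕜 E : Type*} [Field 𝕜] [LinearOrder 𝕜]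
    [IsStrictOrderedRing 𝕜] [AddCommGroup E] [Module 𝕜 E] (g b : E) {ε : 𝕜} (hε : 0 < ε) :
    b ∈ openSegment 𝕜 g (b + ε • (b - g)) := by
  have hε₁ : (1 + ε) ≠ 0 := by positivity
  refine ⟨ε / (1 + ε), 1 / (1 + ε), by positivity, by positivity, by field_simp; ring, ?_⟩
  match_scalars
  · field_simp; ring
  · field_simp

theorem exists_pos_add_smul_sub_mem_of_mem_nhds {E : Type*} [AddCommGroup E] [Module ℝ E]
    [TopologicalSpace E] [ContinuousAdd E] [ContinuousSMul ℝ E] {s : Set E} {q : E}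
    (hs : s ∈ 𝓝 q) (p : E) : ∃ ε > (0 : ℝ), q + ε • (q - p) ∈ s := by
  have hcont : Tendsto (fun ε : ℝ => q + ε • (q - p)) (𝓝[>] 0) (𝓝 q) := by
    have : Continuous fun ε : ℝ => q + ε • (q - p) := by fun_prop
    simpa using (this.tendsto 0).mono_left nhdsWithin_le_nhds
  obtain ⟨ε, hεs, hε⟩ := ((hcont.eventually_mem hs).and self_mem_nhdsWithin).exists
  exact ⟨ε, hε, hεs⟩

theorem Prod.le_total_of_fst_eq {α β : Type*} [Preorder α] [LinearOrder β] {x y : α × β}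
    (h : x.1 = y.1) : x ≤ y ∨ y ≤ x := by
  simp only [Prod.le_def, h, le_refl, true_and]
  exact le_total _ _

theorem Prod.le_total_of_snd_eq {α β : Type*} [LinearOrder α] [Preorder β] {x y : α × β}
    (h : x.2 = y.2) : x ≤ y ∨ y ≤ x := by
  simp only [Prod.le_def, h, le_refl, and_true]
  exact le_total _ _

theorem exists_ne_le_of_forall_fst_eq_or_snd_eq {ι α β : Type*} [Fintype ι] [LinearOrder α]
    [LinearOrder β] (hι : 2 < Fintype.card ι) (c : ι → α × β) (a : α) (b : β)
    (hc : ∀ i, (c i).1 = a ∨ (c i).2 = b) : ∃ i j, i ≠ j ∧ c i ≤ c j := by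
  obtain ⟨i, j, hij, hfst⟩ :=
    Fintype.exists_ne_map_eq_of_card_lt (fun k => (c k).1 = a) (by simpa using hι)
  have hsame : (c i).1 = a ↔ (c j).1 = a := Iff.of_eq hfst
  have hcmp : c i ≤ c j ∨ c j ≤ c i := by
    by_cases hi : (c i).1 = a
    · exact Prod.le_total_of_fst_eq (hi.trans (hsame.mp hi).symm)
    · have hj : (c j).1 ≠ a := hsame.not.mp hi
      exact Prod.le_total_of_snd_eq (((hc i).resolve_left hi).trans ((hc j).resolve_left hj).symm)
  rcases hcmp with h | h
  exacts [⟨i, j, hij, h⟩, ⟨j, i, hij.symm, h⟩]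

theorem exists_ne_pos_add_smul_sub_nonneg {ι : Type*} [Fintype ι] (hι : 2 < Fintype.card ι)
    (c : ι → ℝ × ℝ) (hc : ∀ i, 0 ≤ c i) :
    ∃ i j, i ≠ j ∧ ∃ ε > (0 : ℝ), 0 ≤ c j + ε • (c j - c i) := by
  by_cases hint : ∃ k, 0 < (c k).1 ∧ 0 < (c k).2
  · obtain ⟨k, hk⟩ := hint
    have : Nontrivial ι := Fintype.one_lt_card_iff_nontrivial.mp (by omega)
    obtain ⟨i, hik⟩ := exists_ne k
    have hnhds : Ici (0 : ℝ × ℝ) ∈ 𝓝 (c k) :=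
      Filter.mem_of_superset ((isOpen_Ioi.prod isOpen_Ioi).mem_nhds hk)
        fun x hx => Prod.le_def.mpr ⟨le_of_lt hx.1, le_of_lt hx.2⟩
    exact ⟨i, k, hik, exists_pos_add_smul_sub_mem_of_mem_nhds hnhds (c i)⟩
  · have hbdry : ∀ k, (c k).1 = 0 ∨ (c k).2 = 0 := fun k => by
      obtain ⟨hk₁, hk₂⟩ := Prod.le_def.mp (hc k)
      by_contra! h
      exact hint ⟨k, hk₁.lt_of_ne h.1.symm, hk₂.lt_of_ne h.2.symm⟩
    obtain ⟨i, j, hij, hle⟩ := exists_ne_le_of_forall_fst_eq_or_snd_eq hι c 0 0 hbdry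
    refine ⟨i, j, hij, 1, one_pos, ?_⟩
    rw [one_smul]
    exact add_nonneg (hc j) (sub_nonneg.mpr hle)

/-- Any placement of at least 3 guards in a wedge creates a point
hidden from some guard. -/
theorem statement15 (W : Set Plane) (hW : IsWedge W) (G : Finset Plane)
    (hG : ↑G ⊆ W) (hcard : 3 ≤ G.card) :
    ∃ x ∈ W, ∃ g ∈ G, Hidden G g x := by
  obtain ⟨a, u, v, -, rfl⟩ := hW
  set φ : ℝ × ℝ → Plane := fun c => a + c.1 • u + c.2 • v with hφ
  have hcoord : ∀ g : G, ∃ c : ℝ × ℝ, 0 ≤ c ∧ φ c = g := fun g => by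
    obtain ⟨s, t, hs, ht, h⟩ := hG g.2
    exact ⟨(s, t), Prod.le_def.mpr ⟨hs, ht⟩, h.symm⟩
  choose c hc0 hc using hcoord
  obtain ⟨i, j, hij, ε, hε, hx⟩ :=
    exists_ne_pos_add_smul_sub_nonneg (by rw [Fintype.card_coe]; omega) c hc0
  have hφx : φ (c j + ε • (c j - c i)) = j + ε • ((j : Plane) - i) := by
    rw [← hc i, ← hc j, hφ]
    simp only [Prod.fst_add, Prod.snd_add, Prod.smul_fst, Prod.smul_snd, Prod.fst_sub,
      Prod.snd_sub, smul_eq_mul]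
    module
  refine ⟨φ (c j + ε • (c j - c i)), ⟨_, _, (Prod.le_def.mp hx).1, (Prod.le_def.mp hx).2, rfl⟩,
    i, i.2, j, j.2, Subtype.coe_injective.ne hij.symm, ?_⟩
  rw [hφx]
  exact mem_openSegment_add_smul_sub _ _ hε
end
end
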